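/- arXiv:2012.04302 — 4 statements merged into one kernel-verified Lean document; each statement's English description precedes it below -/
import Mathlib

section
/- Let G be a connected finite simple graph on vertex set V containing a cycle whose vertex set is W, and suppose W ≠ V. Then there exists a vertex u ∈ V \ W such that G contains a path whose vertex set is exactly W ∪ {u} and which has u as an endpoint. In particular, G contains a path with |W| + 1 vertices. -/
/-!
Some edge `ua` of `G` leaves the cycle, since `G` is connected and the cycle misses a vertex.
Rotating the cycle to start at `a` and deleting its first edge leaves a path through all of `W`
ending at `a`; reversing it and prepending `ua` gives the required path.
-/

lemma List.Nodup.ncard_setOf_mem {α : Type*} {l : List α} (hl : l.Nodup) :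
    {x | x ∈ l}.ncard = l.length := by
  classical
  rw [show {x | x ∈ l} = (l.toFinset : Set α) by ext; simp, Set.ncard_coe_finset,
    List.toFinset_card_of_nodup hl]

namespace SimpleGraph.Walk

variable {V : Type*} {G : SimpleGraph V}

lemma mem_support_tail_iff_of_not_nil {v x : V} {c : G.Walk v v} (hc : ¬c.Nil) :
    x ∈ c.tail.support ↔ x ∈ c.support := by
  rw [support_tail_of_not_nil c hc, mem_support_iff c, or_iff_right_of_imp]
  rintro rfl
  exact end_mem_tail_support hc

lemma IsCycle.ncard_support {v : V} {c : G.Walk v v} (hc : c.IsCycle) :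
    {x | x ∈ c.support}.ncard = c.length := by
  have hsupp : {x | x ∈ c.support} = {x | x ∈ c.tail.support} := by
    ext x; exact (mem_support_tail_iff_of_not_nil hc.not_nil).symm
  rw [hsupp, hc.isPath_tail.support_nodup.ncard_setOf_mem, length_support,
    length_tail_add_one hc.not_nil]

lemma IsCycle.exists_isPath_of_adj {v a u : V} {c : G.Walk v v} (hc : c.IsCycle)
    (ha : a ∈ c.support) (hu : u ∉ c.support) (hadj : G.Adj u a) :
    ∃ w, ∃ p : G.Walk u w, p.IsPath ∧
      {x | x ∈ p.support} = insert u {x | x ∈ c.support} ∧ p.length = c.length := by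
  classical
  set q := (c.rotate a ha).tail
  have hrot : (c.rotate a ha).IsCycle := hc.rotate ha
  have hq : ∀ x, x ∈ q.support ↔ x ∈ c.support := fun x => by
    rw [mem_support_tail_iff_of_not_nil hrot.not_nil, mem_support_rotate_iff]
  refine ⟨_, cons hadj q.reverse, hrot.isPath_tail.reverse.cons
    (by rwa [support_reverse, List.mem_reverse, hq]), ?_, ?_⟩
  · ext x
    simp [hq]
  · rw [length_cons, length_reverse, length_tail_add_one hrot.not_nil, length_rotate]

end SimpleGraph.Walk

theorem stmt_5_general {V : Type*} (G : SimpleGraph V) (hG : G.Connected)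
    (W : Set V) (c : V) (C : G.Walk c c) (hC : C.IsCycle)
    (hW : W = {x | x ∈ C.support}) (hWne : W ≠ Set.univ) :
    ∃ u ∉ W, ∃ w : V, ∃ P : G.Walk u w, P.IsPath ∧
      {x | x ∈ P.support} = W ∪ {u} ∧ P.support.length = W.ncard + 1 := by
  obtain ⟨v, hv⟩ := (Set.ne_univ_iff_exists_notMem W).mp hWne
  have hcW : c ∈ W := hW ▸ C.start_mem_support
  obtain ⟨d, -, haW, huW⟩ := (hG c v).some.exists_boundary_dart W hcW hv
  subst hW
  obtain ⟨w, P, hP, hsupp, hlen⟩ := hC.exists_isPath_of_adj haW huW d.adj.symm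
  refine ⟨d.snd, huW, w, P, hP, by rw [hsupp, Set.union_singleton], ?_⟩
  rw [SimpleGraph.Walk.length_support, hlen, hC.ncard_support]

/-- If a connected graph `G` contains a cycle with vertex set `W ≠ V`, then there is a
vertex `u ∉ W` and a path of `G` with vertex set exactly `W ∪ {u}` having `u` as an
endpoint; in particular `G` contains a path with `|W| + 1` vertices. -/
theorem stmt_5 {V : Type*} [Fintype V] (G : SimpleGraph V) (hG : G.Connected)
    (W : Set V) (c : V) (C : G.Walk c c) (hC : C.IsCycle)
    (hW : W = {x | x ∈ C.support}) (hWne : W ≠ Set.univ) :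
    ∃ u ∉ W, ∃ w : V, ∃ P : G.Walk u w, P.IsPath ∧
      {x | x ∈ P.support} = W ∪ {u} ∧ P.support.length = W.ncard + 1 :=
  stmt_5_general G hG W c C hC hW hWne
end

section
/- Let b ≥ 0 be a real number, let k ≥ 1 be an integer, and let p : ℕ → ℝ and s : ℕ → ℕ be functions with s(j) ≥ 1 for all 1 ≤ j ≤ k. Suppose that for every j with 1 ≤ j < k, either (s(j+1) = s(j) and p(j+1) ≤ p(j)) or (s(j+1) + 1 = s(j) and p(j+1) ≤ p(j) + b/s(j+1) + 2). Then p(k) ≤ p(1) + 2·s(1) + b·∑_{r=1}^{s(1)} 1/r. -/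
lemma harm_split (n : ℕ) (hn : 1 ≤ n) :
    ∑ r ∈ Finset.Icc 1 n, (1 : ℝ) / (r : ℝ)
      = (∑ r ∈ Finset.Icc 1 (n - 1), (1 : ℝ) / (r : ℝ)) + 1 / (n : ℝ) := by
  obtain ⟨m, rfl⟩ := Nat.exists_eq_add_of_le hn
  simp only [Nat.add_sub_cancel_left, add_comm 1 m]
  rw [show m + 1 = m + 1 from rfl, Finset.sum_Icc_succ_top (by omega)]
  push_cast
  ring_nf

/-- A potential function `p` that either stays put (when the set size `s` is unchanged)
or increases by at most `b/s(j+1) + 2` (when the set shrinks by one element) satisfies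
`p k ≤ p 1 + 2·s 1 + b·H_{s 1}`. -/
theorem stmt_6 (b : ℝ) (hb : 0 ≤ b) (k : ℕ) (hk : 1 ≤ k)
    (p : ℕ → ℝ) (s : ℕ → ℕ)
    (hs : ∀ j, 1 ≤ j → j ≤ k → 1 ≤ s j)
    (hstep : ∀ j, 1 ≤ j → j < k →
      (s (j + 1) = s j ∧ p (j + 1) ≤ p j) ∨
      (s (j + 1) + 1 = s j ∧ p (j + 1) ≤ p j + b / (s (j + 1) : ℝ) + 2)) :
    p k ≤ p 1 + 2 * (s 1 : ℝ) + b * ∑ r ∈ Finset.Icc 1 (s 1), (1 : ℝ) / (r : ℝ) := by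
  set Φ : ℕ → ℝ := fun j => p j + 2 * (s j : ℝ) +
      b * ∑ r ∈ Finset.Icc 1 (s j - 1), (1 : ℝ) / (r : ℝ) with hΦ
  have hmono : ∀ j, 1 ≤ j → j ≤ k → Φ j ≤ Φ 1 := by
    intro j hj1 hjk
    induction j with
    | zero => omega
    | succ n ih =>
      rcases Nat.eq_or_lt_of_le hj1 with h1 | h1
      · simp [← h1]
      · have hn1 : 1 ≤ n := by omega
        have hnk : n ≤ k := by omega
        refine le_trans ?_ (ih hn1 hnk)
        rcases hstep n hn1 (by omega) with ⟨hse, hpe⟩ | ⟨hse, hpe⟩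
        · simp only [hΦ, hse]
          linarith
        · have hs1 : 1 ≤ s (n + 1) := hs (n + 1) (by omega) hjk
          have hsum : ∑ r ∈ Finset.Icc 1 (s n - 1), (1 : ℝ) / (r : ℝ)
              = (∑ r ∈ Finset.Icc 1 (s (n + 1) - 1), (1 : ℝ) / (r : ℝ))
                + 1 / (s (n + 1) : ℝ) := by
            have : s n - 1 = s (n + 1) := by omega
            rw [this, harm_split _ hs1]
          have hcast : (s (n + 1) : ℝ) + 1 = (s n : ℝ) := by
            exact_mod_cast congrArg (Nat.cast : ℕ → ℝ) hse
          have hpos : (0 : ℝ) < (s (n + 1) : ℝ) := by exact_mod_cast hs1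
          have hdiv : b / (s (n + 1) : ℝ) = b * (1 / (s (n + 1) : ℝ)) := by ring
          simp only [hΦ, hsum]
          rw [hdiv] at hpe
          linarith
  have hk' := hmono k hk le_rfl
  have hsk : 1 ≤ s k := hs k hk le_rfl
  have hpk : p k ≤ Φ k := by
    have h0 : 0 ≤ ∑ r ∈ Finset.Icc 1 (s k - 1), (1 : ℝ) / (r : ℝ) := by
      apply Finset.sum_nonneg; intro r hr; positivity
    have : (0 : ℝ) ≤ (s k : ℝ) := by positivity
    simp only [hΦ]; nlinarith
  have h1le : Φ 1 ≤ p 1 + 2 * (s 1 : ℝ) + b * ∑ r ∈ Finset.Icc 1 (s 1), (1 : ℝ) / (r : ℝ) := by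
    have hs11 : 1 ≤ s 1 := hs 1 le_rfl hk
    have := harm_split (s 1) hs11
    have hpos : (0 : ℝ) < (s 1 : ℝ) := by exact_mod_cast hs11
    have : b * ∑ r ∈ Finset.Icc 1 (s 1 - 1), (1 : ℝ) / (r : ℝ)
        ≤ b * ∑ r ∈ Finset.Icc 1 (s 1), (1 : ℝ) / (r : ℝ) := by
      apply mul_le_mul_of_nonneg_left _ hb
      rw [this]
      have : 0 ≤ 1 / (s 1 : ℝ) := by positivity
      linarith
    simp only [hΦ]
    linarith
  exact hpk.trans (hk'.trans h1le)
end

section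
/- Let M be a finite simple graph, let Q be a path in M such that every internal vertex of Q has degree at most 2 in M, and let P be a path in M such that every neighbour in M of each endpoint of P lies on P (i.e., P cannot be extended at either end). If some internal vertex of Q lies on P, then every vertex of Q lies on P. -/
open SimpleGraph Walk

/-- Key: a vertex on a non-extendable path P with degree ≤ 2 has all its neighbours on P. -/
lemma keyA {V : Type*} [Fintype V] (M : SimpleGraph V) [DecidableRel M.Adj]
    (c d : V) (P : M.Walk c d) (hP : P.IsPath)
    (hc : ∀ y : V, M.Adj c y → y ∈ P.support)
    (hd : ∀ y : V, M.Adj d y → y ∈ P.support)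
    (z : V) (hz : z ∈ P.support) (hdz : M.degree z ≤ 2) :
    ∀ y, M.Adj z y → y ∈ P.support := by
  classical
  intro y hy
  by_cases hzc : z = c
  · exact hc y (hzc ▸ hy)
  by_cases hzd : z = d
  · exact hd y (hzd ▸ hy)
  -- z is internal in P
  set P1 := P.takeUntil z hz with hP1
  set P2 := P.dropUntil z hz with hP2
  have hspec := P.take_spec hz
  have hnodup : (P1.support ++ P2.support.tail).Nodup := by
    rw [← support_append, hspec]; exact hP.support_nodup
  -- P1 : Walk c z is not nil
  obtain ⟨u, hu, huP1⟩ : ∃ u, M.Adj z u ∧ u ∈ P1.support := by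
    cases h : P1.reverse with
    | nil => exact (hzc rfl).elim
    | @cons _ u _ hadj w =>
      refine ⟨u, hadj, ?_⟩
      have : u ∈ P1.reverse.support := by rw [h]; simp
      rwa [support_reverse, List.mem_reverse] at this
  obtain ⟨v, hv, hvP2⟩ : ∃ v, M.Adj z v ∧ v ∈ P2.support.tail := by
    cases h : P2 with
    | nil => exact absurd rfl hzd
    | @cons _ v _ hadj w =>
      exact ⟨v, hadj, by simp [Walk.support_cons, Walk.start_mem_support w]⟩
  have huv : u ≠ v := by
    rintro rfl
    exact (List.disjoint_of_nodup_append hnodup) huP1 hvP2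
  have hsub : ({u, v} : Finset V) ⊆ M.neighborFinset z := by
    intro w hw
    simp only [Finset.mem_insert, Finset.mem_singleton] at hw
    rcases hw with rfl | rfl <;> simp [SimpleGraph.mem_neighborFinset, hu, hv]
  have hcard : (M.neighborFinset z).card ≤ ({u, v} : Finset V).card := by
    rw [Finset.card_pair huv]
    exact hdz
  have := Finset.eq_of_subset_of_card_le hsub hcard
  have hyuv : y ∈ ({u, v} : Finset V) := by
    rw [this]; simp [SimpleGraph.mem_neighborFinset, hy]
  simp only [Finset.mem_insert, Finset.mem_singleton] at hyuv
  rcases hyuv with rfl | rfl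
  · exact P.support_takeUntil_subset hz huP1
  · exact P.support_dropUntil_subset hz (List.mem_of_mem_tail hvP2)

/-- Propagation along a path. -/
lemma keyC {V : Type*} (M : SimpleGraph V) {S : List V} :
    ∀ {u v : V} (W : M.Walk u v), W.IsPath → u ∈ S →
    (∀ z ∈ W.support, z ≠ v → z ∈ S → ∀ y, M.Adj z y → y ∈ S) →
    ∀ x ∈ W.support, x ∈ S := by
  intro u v W
  induction W with
  | nil => intro _ hu _ x hx; simp at hx; subst hx; exact hu
  | @cons u u' v hadj w ih =>
    intro hpath hu hprop x hx
    have huv : u ≠ v := by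
      rintro rfl
      exact (Walk.cons_isPath_iff _ _ |>.mp hpath).2 w.end_mem_support
    have hu' : u' ∈ S := hprop u (by simp) huv hu u' hadj
    rw [Walk.support_cons, List.mem_cons] at hx
    rcases hx with rfl | hx
    · exact hu
    · exact ih (Walk.cons_isPath_iff _ _ |>.mp hpath).1 hu'
        (fun z hz hzv => hprop z (by simp [hz]) hzv) x hx

/-- If every internal vertex of a path `Q` has degree at most 2 in `M`, and `P` is a
path of `M` that cannot be extended at either end, then as soon as some internal
vertex of `Q` lies on `P`, all of `Q` lies on `P`. -/
theorem stmt_10 {V : Type*} [Fintype V] (M : SimpleGraph V) [DecidableRel M.Adj]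
    (a b : V) (Q : M.Walk a b) (hQ : Q.IsPath)
    (hdeg : ∀ x ∈ Q.support, x ≠ a → x ≠ b → M.degree x ≤ 2)
    (c d : V) (P : M.Walk c d) (hP : P.IsPath)
    (hc : ∀ y : V, M.Adj c y → y ∈ P.support)
    (hd : ∀ y : V, M.Adj d y → y ∈ P.support)
    (hint : ∃ x ∈ Q.support, x ≠ a ∧ x ≠ b ∧ x ∈ P.support) :
    ∀ x ∈ Q.support, x ∈ P.support := by
  classical
  obtain ⟨x, hxQ, hxa, hxb, hxP⟩ := hint
  set Q1 := Q.takeUntil x hxQ with hQ1def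
  set Q2 := Q.dropUntil x hxQ with hQ2def
  have hspec := Q.take_spec hxQ
  have hnodup : (Q1.support ++ Q2.support.tail).Nodup := by
    rw [← Walk.support_append, hspec]; exact hQ.support_nodup
  have hdisj := List.disjoint_of_nodup_append hnodup
  have hQ1p : Q1.IsPath := hQ.takeUntil hxQ
  have hQ2p : Q2.IsPath := hQ.dropUntil hxQ
  -- vertices of Q2 other than b are internal in Q
  have hQ2prop : ∀ z ∈ Q2.support, z ≠ b → z ∈ P.support → ∀ y, M.Adj z y → y ∈ P.support := by
    intro z hz hzb hzP
    have hza : z ≠ a := by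
      intro h
      have hzQ1 : z ∈ Q1.support := by rw [h]; exact Q1.start_mem_support
      rcases List.mem_cons.mp (Q2.support_eq_cons ▸ hz) with h' | h'
      · exact hxa (h'.symm.trans h)
      · exact hdisj hzQ1 h'
    exact keyA M c d P hP hc hd z hzP
      (hdeg z (Q.support_dropUntil_subset hxQ hz) hza hzb)
  have hQ1prop : ∀ z ∈ Q1.reverse.support, z ≠ a → z ∈ P.support →
      ∀ y, M.Adj z y → y ∈ P.support := by
    intro z hz hza hzP
    rw [Walk.support_reverse, List.mem_reverse] at hz
    have hzb : z ≠ b := by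
      intro h
      have hzQ2 : z ∈ Q2.support := by rw [h]; exact Q2.end_mem_support
      rcases List.mem_cons.mp (Q2.support_eq_cons ▸ hzQ2) with h' | h'
      · exact hxb (h'.symm.trans h)
      · exact hdisj hz h'
    exact keyA M c d P hP hc hd z hzP
      (hdeg z (Q.support_takeUntil_subset hxQ hz) hza hzb)
  have h2 : ∀ y ∈ Q2.support, y ∈ P.support :=
    keyC M Q2 hQ2p hxP hQ2prop
  have h1 : ∀ y ∈ Q1.support, y ∈ P.support := by
    intro y hy
    exact keyC M Q1.reverse hQ1p.reverse hxP hQ1prop y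
      (by rwa [Walk.support_reverse, List.mem_reverse])
  intro y hy
  rw [← hspec, Walk.mem_support_append_iff] at hy
  rcases hy with hy | hy
  · exact h1 y hy
  · exact h2 y hy
end

section
/- For every integer m ≥ 1000, the sum ∑_{x=9}^{⌊m/25⌋} (x/(5m))^{max(3, ⌈x/3⌉)} is at most m^{-3/2}. -/
open Finset

lemma aux_pow_stmt11 (x : ℕ) (hx : 9 ≤ x) : x ^ 3 ≤ 729 * 4 ^ (x - 9) := by
  induction x, hx using Nat.le_induction with
  | base => norm_num
  | succ n hn ih =>
    have h : n + 1 - 9 = (n - 9) + 1 := by omega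
    rw [h, pow_succ]
    have ha : 9 * n ≤ n * n := Nat.mul_le_mul_right n hn
    have hb : 9 * (n * n) ≤ n * (n * n) := Nat.mul_le_mul_right (n * n) hn
    have h1 : (n + 1) ^ 3 ≤ 4 * n ^ 3 := by nlinarith
    calc (n + 1) ^ 3 ≤ 4 * n ^ 3 := h1
      _ ≤ 4 * (729 * 4 ^ (n - 9)) := by nlinarith [ih]
      _ = 729 * (4 ^ (n - 9) * 4) := by ring

lemma geom_stmt11 (N : ℕ) : ∑ x ∈ Icc 9 N, ((4 : ℝ) / 5) ^ (x - 9) ≤ 5 := by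
  rw [← Finset.Ico_add_one_right_eq_Icc, Finset.sum_Ico_eq_sum_range]
  have h : ∀ i ∈ Finset.range (N + 1 - 9), ((4 : ℝ) / 5) ^ (9 + i - 9) = ((4:ℝ)/5) ^ i := by
    intro i _
    congr 1
    omega
  rw [Finset.sum_congr rfl h, geom_sum_eq (by norm_num)]
  have h2 : (0:ℝ) ≤ ((4:ℝ)/5) ^ (N + 1 - 9) := by positivity
  rw [div_le_iff_of_neg (by norm_num : ((4:ℝ)/5) - 1 < 0)]
  linarith

/-- For every integer `m ≥ 1000`,
`∑_{x=9}^{⌊m/25⌋} (x/(5m))^{max(3,⌈x/3⌉)} ≤ m^{-3/2}`. -/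
theorem stmt_11 (m : ℕ) (hm : 1000 ≤ m) :
    ∑ x ∈ Finset.Icc 9 (m / 25),
        ((x : ℝ) / (5 * (m : ℝ))) ^ (max 3 ⌈(x : ℝ) / 3⌉₊) ≤
      (m : ℝ) ^ (-(3 / 2) : ℝ) := by
  have hm' : (1000 : ℝ) ≤ (m : ℝ) := by exact_mod_cast hm
  have hmpos : (0 : ℝ) < (m : ℝ) := by linarith
  have key : ∀ x ∈ Finset.Icc 9 (m / 25),
      ((x : ℝ) / (5 * (m : ℝ))) ^ (max 3 ⌈(x : ℝ) / 3⌉₊) ≤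
        729 / (125 * (m : ℝ) ^ 3) * ((4 : ℝ) / 5) ^ (x - 9) := by
    intro x hx
    simp only [Finset.mem_Icc] at hx
    obtain ⟨hx9, hxm⟩ := hx
    set e := max 3 ⌈(x : ℝ) / 3⌉₊ with he
    have he3 : 3 ≤ e := le_max_left _ _
    have h3e : x ≤ 3 * e := by
      have h1 : (x : ℝ) / 3 ≤ (⌈(x : ℝ) / 3⌉₊ : ℝ) := Nat.le_ceil _
      have h2 : (x : ℝ) ≤ 3 * (⌈(x : ℝ) / 3⌉₊ : ℝ) := by linarith
      have h3 : x ≤ 3 * ⌈(x : ℝ) / 3⌉₊ := by exact_mod_cast h2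
      omega
    have hxm' : 25 * x ≤ m := by
      have := Nat.div_mul_le_self m 25
      omega
    have hxm'' : (25 : ℝ) * x ≤ (m : ℝ) := by exact_mod_cast hxm'
    have h0 : (0 : ℝ) ≤ (x : ℝ) / (5 * m) := by positivity
    have h125 : (x : ℝ) / (5 * m) ≤ 1 / 125 := by
      rw [div_le_div_iff₀ (by positivity) (by norm_num)]
      linarith
    have hsplit : ((x : ℝ) / (5 * m)) ^ e
        = ((x : ℝ) / (5 * m)) ^ 3 * ((x : ℝ) / (5 * m)) ^ (e - 3) := by
      rw [← pow_add]
      congr 1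
      omega
    rw [hsplit]
    have hb1 : ((x : ℝ) / (5 * m)) ^ (e - 3) ≤ ((1 : ℝ) / 5) ^ (x - 9) := by
      calc ((x : ℝ) / (5 * m)) ^ (e - 3) ≤ ((1 : ℝ) / 125) ^ (e - 3) :=
            pow_le_pow_left₀ h0 h125 _
        _ = ((1 : ℝ) / 5) ^ (3 * (e - 3)) := by
            rw [pow_mul]; norm_num
        _ ≤ ((1 : ℝ) / 5) ^ (x - 9) := by
            apply pow_le_pow_of_le_one (by norm_num) (by norm_num)
            omega
    have hb2 : ((x : ℝ) / (5 * m)) ^ 3 = (x : ℝ) ^ 3 / (125 * (m : ℝ) ^ 3) := by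
      rw [div_pow]; ring_nf
    have hx3 : (x : ℝ) ^ 3 ≤ 729 * 4 ^ (x - 9) := by
      exact_mod_cast aux_pow_stmt11 x hx9
    calc ((x : ℝ) / (5 * m)) ^ 3 * ((x : ℝ) / (5 * m)) ^ (e - 3)
        ≤ ((x : ℝ) ^ 3 / (125 * (m : ℝ) ^ 3)) * ((1 : ℝ) / 5) ^ (x - 9) := by
          rw [hb2]
          apply mul_le_mul_of_nonneg_left hb1 (by positivity)
      _ ≤ (729 * 4 ^ (x - 9) / (125 * (m : ℝ) ^ 3)) * ((1 : ℝ) / 5) ^ (x - 9) := by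
          gcongr
      _ = 729 / (125 * (m : ℝ) ^ 3) * ((4 : ℝ) / 5) ^ (x - 9) := by
          rw [div_pow, div_pow, one_pow]
          ring
  calc ∑ x ∈ Finset.Icc 9 (m / 25), ((x : ℝ) / (5 * (m : ℝ))) ^ (max 3 ⌈(x : ℝ) / 3⌉₊)
      ≤ ∑ x ∈ Finset.Icc 9 (m / 25), 729 / (125 * (m : ℝ) ^ 3) * ((4 : ℝ) / 5) ^ (x - 9) :=
        Finset.sum_le_sum key
    _ = 729 / (125 * (m : ℝ) ^ 3) * ∑ x ∈ Finset.Icc 9 (m / 25), ((4 : ℝ) / 5) ^ (x - 9) := by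
        rw [Finset.mul_sum]
    _ ≤ 729 / (125 * (m : ℝ) ^ 3) * 5 := by
        apply mul_le_mul_of_nonneg_left (geom_stmt11 _) (by positivity)
    _ ≤ (m : ℝ) ^ (-(3 / 2) : ℝ) := by
        have hrw : (m : ℝ) ^ (-(3 / 2) : ℝ) = (m : ℝ) ^ ((3 : ℝ) / 2) * ((m : ℝ) ^ 3)⁻¹ := by
          rw [← Real.rpow_natCast (m : ℝ) 3, ← Real.rpow_neg hmpos.le, ← Real.rpow_add hmpos]
          norm_num
        rw [hrw]
        have h1 : (m : ℝ) ≤ (m : ℝ) ^ ((3 : ℝ) / 2) := by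
          nth_rewrite 1 [← Real.rpow_one (m : ℝ)]
          apply Real.rpow_le_rpow_of_exponent_le (by linarith) (by norm_num)
        have h3 : (3645 : ℝ) / 125 ≤ (m : ℝ) ^ ((3 : ℝ) / 2) := by
          have : (3645 : ℝ) / 125 ≤ 1000 := by norm_num
          linarith
        have h4 : 729 / (125 * (m : ℝ) ^ 3) * 5 = 3645 / 125 * ((m : ℝ) ^ 3)⁻¹ := by
          field_simp
          ring
        rw [h4]
        gcongr
end
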